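/- Let 𝔥 be a Euclidean space with spectral decomposition system (𝒳, S, γ, (Λ_a)_{a∈A}) and spectral-induced ordering mapping τ. Then: (i) τ ∘ γ = γ and γ ∘ Λ_a ∘ γ = γ for every a ∈ A; (ii) the range of γ equals the range of τ (hence is a closed convex cone in 𝒳); (iii) ‖X‖ = ‖γ(X)‖ for every X ∈ 𝔥; (iv) γ is nonexpansive: ‖γ(X) − γ(Y)‖ ≤ ‖X − Y‖ for all X, Y ∈ 𝔥; (v) γ(αX) = α γ(X) for every X ∈ 𝔥 and every real α ≥ 0; and (vi) γ(−X) ∈ −(S • γ(X)) for every X ∈ 𝔥. -/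

import Mathlib

/-!
Since `X = Λ_a (γ X)` for some isometry `Λ_a`, `γ` preserves norms, and expanding
`‖γ X - γ Y‖²` against the trace inequality `⟪X, Y⟫ ≤ ⟪γ X, γ Y⟫` shows that `γ` is
nonexpansive. The same expansion shows that a vector `u` with `‖u‖ = ‖v‖` and
`‖v‖² ≤ ⟪u, v⟫` equals `v`; applied to `γ (α X)` against `α γ X`, and to `γ (Λ_a (u + v))`
against `u + v` for `u, v` in the range of `γ`, this gives positive homogeneity of `γ` and
closedness of its range under addition. The range of `γ` is the fixed-point set of the
continuous map `γ ∘ Λ_a`, hence closed.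
-/

open scoped InnerProductSpace

/-- A spectral decomposition system `(𝓧, S, γ, (Λ a)_{a ∈ A})` for a Euclidean space `𝓗`,
with spectral-induced ordering mapping `τ`. -/
structure SpectralDecompositionSystem
    (𝓗 : Type*) (𝓧 : Type*) [NormedAddCommGroup 𝓗] [InnerProductSpace ℝ 𝓗]
    [NormedAddCommGroup 𝓧] [InnerProductSpace ℝ 𝓧]
    (S : Type*) [Group S] [MulAction S 𝓧]
    {A : Type*} (γ : 𝓗 → 𝓧) (Λ : A → 𝓧 →ₗ[ℝ] 𝓗) (τ : 𝓧 → 𝓧) : Prop where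
  /-- `S` acts on `𝓧` by linear maps. -/
  smul_add_smul : ∀ (s : S) (c : ℝ) (x y : 𝓧), s • (c • x + y) = c • (s • x) + s • y
  /-- `S` acts on `𝓧` by isometries. -/
  norm_smul : ∀ (s : S) (x : 𝓧), ‖s • x‖ = ‖x‖
  /-- Each `Λ a` is a (linear) isometry. -/
  norm_lambda : ∀ (a : A) (x : 𝓧), ‖Λ a x‖ = ‖x‖
  /-- `τ` is `S`-invariant. -/
  tau_smul : ∀ (s : S) (x : 𝓧), τ (s • x) = τ x
  /-- `τ x` belongs to the orbit `S • x`. -/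
  tau_orbit : ∀ x : 𝓧, ∃ s : S, τ x = s • x
  /-- `γ ∘ Λ a = τ` for all `a ∈ A`. -/
  gamma_lambda : ∀ (a : A) (x : 𝓧), γ (Λ a x) = τ x
  /-- Every element of `𝓗` admits a spectral decomposition. -/
  exists_decomp : ∀ Z : 𝓗, ∃ a : A, Z = Λ a (γ Z)
  /-- Von Neumann-type trace inequality. -/
  inner_le : ∀ Z W : 𝓗, ⟪Z, W⟫_ℝ ≤ ⟪γ Z, γ W⟫_ℝ

theorem eq_of_norm_eq_of_norm_sq_le_inner {E : Type*} [NormedAddCommGroup E]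
    [InnerProductSpace ℝ E] {u v : E} (hnorm : ‖u‖ = ‖v‖) (hinner : ‖v‖ ^ 2 ≤ ⟪u, v⟫_ℝ) :
    u = v := by
  have hsq : ‖u - v‖ ^ 2 ≤ 0 := by
    rw [norm_sub_sq_real, hnorm]
    linarith
  rw [← sub_eq_zero, ← norm_eq_zero]
  exact pow_eq_zero_iff two_ne_zero |>.mp (le_antisymm hsq (sq_nonneg _))

namespace SpectralDecompositionSystem

variable {𝓗 𝓧 : Type*} [NormedAddCommGroup 𝓗] [InnerProductSpace ℝ 𝓗]
  [NormedAddCommGroup 𝓧] [InnerProductSpace ℝ 𝓧] {S : Type*} [Group S] [MulAction S 𝓧]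
  {A : Type*} {γ : 𝓗 → 𝓧} {Λ : A → 𝓧 →ₗ[ℝ] 𝓗} {τ : 𝓧 → 𝓧}
  (h : SpectralDecompositionSystem 𝓗 𝓧 S γ Λ τ)
include h

protected theorem smul_zero (s : S) : s • (0 : 𝓧) = 0 := by
  have h0 := h.smul_add_smul s 1 0 0
  rw [one_smul, one_smul, add_zero] at h0
  exact left_eq_add.mp h0

protected theorem smul_neg (s : S) (x : 𝓧) : s • (-x) = -(s • x) := by
  simpa [h.smul_zero s] using h.smul_add_smul s (-1) x 0

def lambdaIsometry (a : A) : 𝓧 →ₗᵢ[ℝ] 𝓗 := ⟨Λ a, h.norm_lambda a⟩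

theorem inner_lambda_lambda (a : A) (x y : 𝓧) : ⟪Λ a x, Λ a y⟫_ℝ = ⟪x, y⟫_ℝ :=
  (h.lambdaIsometry a).inner_map_map x y

theorem tau_gamma (Z : 𝓗) : τ (γ Z) = γ Z := by
  obtain ⟨a, ha⟩ := h.exists_decomp Z
  rw [← h.gamma_lambda a, ← ha]

theorem gamma_lambda_gamma (a : A) (Z : 𝓗) : γ (Λ a (γ Z)) = γ Z :=
  (h.gamma_lambda a (γ Z)).trans (h.tau_gamma Z)

theorem norm_gamma (Z : 𝓗) : ‖γ Z‖ = ‖Z‖ := by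
  obtain ⟨a, ha⟩ := h.exists_decomp Z
  conv_rhs => rw [ha]
  rw [h.norm_lambda]

theorem norm_gamma_lambda (a : A) (x : 𝓧) : ‖γ (Λ a x)‖ = ‖x‖ := by
  rw [h.norm_gamma, h.norm_lambda]

theorem norm_gamma_sub_gamma_le (Z W : 𝓗) : ‖γ Z - γ W‖ ≤ ‖Z - W‖ := by
  have hsq : ‖γ Z - γ W‖ ^ 2 ≤ ‖Z - W‖ ^ 2 := by
    rw [norm_sub_sq_real, norm_sub_sq_real, h.norm_gamma, h.norm_gamma]
    linarith [h.inner_le Z W]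
  exact pow_le_pow_iff_left₀ (norm_nonneg _) (norm_nonneg _) two_ne_zero |>.mp hsq

theorem lipschitzWith_one_gamma : LipschitzWith 1 γ :=
  LipschitzWith.of_dist_le_mul fun Z W => by
    simpa [dist_eq_norm] using h.norm_gamma_sub_gamma_le Z W

theorem gamma_smul_of_nonneg (Z : 𝓗) {α : ℝ} (hα : 0 ≤ α) : γ (α • Z) = α • γ Z := by
  refine eq_of_norm_eq_of_norm_sq_le_inner ?_ ?_
  · rw [h.norm_gamma, _root_.norm_smul, _root_.norm_smul, h.norm_gamma]
  · have htrace := h.inner_le (α • Z) Z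
    rw [real_inner_smul_left, real_inner_self_eq_norm_sq] at htrace
    rw [real_inner_smul_right, _root_.norm_smul, Real.norm_eq_abs, abs_of_nonneg hα, h.norm_gamma]
    nlinarith [mul_le_mul_of_nonneg_left htrace hα]

theorem range_gamma_eq_range_tau : Set.range γ = Set.range τ := by
  obtain ⟨a, -⟩ := h.exists_decomp 0
  ext x
  constructor
  · rintro ⟨Z, rfl⟩
    exact ⟨γ Z, h.tau_gamma Z⟩
  · rintro ⟨y, rfl⟩
    exact ⟨Λ a y, h.gamma_lambda a y⟩

theorem mem_range_gamma_iff (a : A) {x : 𝓧} : x ∈ Set.range γ ↔ γ (Λ a x) = x :=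
  ⟨fun ⟨Z, hZ⟩ => hZ ▸ h.gamma_lambda_gamma a Z, fun hx => ⟨Λ a x, hx⟩⟩

theorem isClosed_range_gamma : IsClosed (Set.range γ) := by
  obtain ⟨a, -⟩ := h.exists_decomp 0
  have hfix : Set.range γ = {x | γ (Λ a x) = x} := Set.ext fun _ => h.mem_range_gamma_iff a
  rw [hfix]
  exact isClosed_eq (h.lipschitzWith_one_gamma.continuous.comp
    (h.lambdaIsometry a).continuous) continuous_id

theorem inner_le_inner_gamma_lambda (a : A) (x : 𝓧) {y : 𝓧} (hy : y ∈ Set.range γ) :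
    ⟪x, y⟫_ℝ ≤ ⟪γ (Λ a x), y⟫_ℝ := by
  have htrace := h.inner_le (Λ a x) (Λ a y)
  rwa [h.inner_lambda_lambda, (h.mem_range_gamma_iff a).mp hy] at htrace

theorem add_mem_range_gamma {u v : 𝓧} (hu : u ∈ Set.range γ) (hv : v ∈ Set.range γ) :
    u + v ∈ Set.range γ := by
  obtain ⟨a, -⟩ := h.exists_decomp 0
  refine (h.mem_range_gamma_iff a).mpr (eq_of_norm_eq_of_norm_sq_le_inner
    (h.norm_gamma_lambda a _) ?_)
  rw [← real_inner_self_eq_norm_sq, inner_add_right, inner_add_right]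
  exact add_le_add (h.inner_le_inner_gamma_lambda a _ hu) (h.inner_le_inner_gamma_lambda a _ hv)

theorem smul_mem_range_gamma {c : ℝ} (hc : 0 ≤ c) {u : 𝓧} (hu : u ∈ Set.range γ) :
    c • u ∈ Set.range γ := by
  obtain ⟨Z, rfl⟩ := hu
  exact ⟨c • Z, h.gamma_smul_of_nonneg Z hc⟩

theorem exists_gamma_neg (Z : 𝓗) : ∃ s : S, γ (-Z) = -(s • γ Z) := by
  obtain ⟨a, ha⟩ := h.exists_decomp Z
  obtain ⟨s, hs⟩ := h.tau_orbit (-γ Z)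
  refine ⟨s, ?_⟩
  rw [ha, ← map_neg, h.gamma_lambda, hs, h.smul_neg, ← ha]

end SpectralDecompositionSystem

variable {𝓗 𝓧 : Type*} [NormedAddCommGroup 𝓗] [InnerProductSpace ℝ 𝓗]
  [FiniteDimensional ℝ 𝓗] [NormedAddCommGroup 𝓧] [InnerProductSpace ℝ 𝓧]
  [FiniteDimensional ℝ 𝓧] {S : Type*} [Group S] [MulAction S 𝓧]
  {A : Type*} [Nonempty A]

theorem spectral_mapping_basic_properties
    (γ : 𝓗 → 𝓧) (Λ : A → 𝓧 →ₗ[ℝ] 𝓗) (τ : 𝓧 → 𝓧)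
    (hsys : SpectralDecompositionSystem 𝓗 𝓧 S γ Λ τ) :
    (∀ Z : 𝓗, τ (γ Z) = γ Z) ∧
    (∀ (a : A) (Z : 𝓗), γ (Λ a (γ Z)) = γ Z) ∧
    Set.range γ = Set.range τ ∧
    IsClosed (Set.range γ) ∧
    (∀ u ∈ Set.range γ, ∀ v ∈ Set.range γ, u + v ∈ Set.range γ) ∧
    (∀ c : ℝ, 0 ≤ c → ∀ u ∈ Set.range γ, c • u ∈ Set.range γ) ∧
    (∀ Z : 𝓗, ‖Z‖ = ‖γ Z‖) ∧
    (∀ Z W : 𝓗, ‖γ Z - γ W‖ ≤ ‖Z - W‖) ∧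
    (∀ (Z : 𝓗) (α : ℝ), 0 ≤ α → γ (α • Z) = α • γ Z) ∧
    (∀ Z : 𝓗, ∃ s : S, γ (-Z) = -(s • γ Z)) :=
  ⟨hsys.tau_gamma, hsys.gamma_lambda_gamma, hsys.range_gamma_eq_range_tau,
    hsys.isClosed_range_gamma, fun _ hu _ hv => hsys.add_mem_range_gamma hu hv,
    fun _ hc _ hu => hsys.smul_mem_range_gamma hc hu, fun Z => (hsys.norm_gamma Z).symm,
    hsys.norm_gamma_sub_gamma_le, fun Z _ hα => hsys.gamma_smul_of_nonneg Z hα,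
    hsys.exists_gamma_neg⟩
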